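/- arXiv:0904.2894 — 6 statements merged into one kernel-verified Lean document; each statement's English description precedes it below -/
import Mathlib

section
/- For every n ≥ 1, the relation on words over a finite alphabet A defined by 'u and v have the same subwords (scattered subsequences) of length at most n' is a congruence of finite index on the free monoid A*. -/
/-- For every `n ≥ 1`, the relation "having the same subwords (scattered
subsequences) of length at most `n`" is a congruence of finite index on the free
monoid `A*` over a finite alphabet: it is an equivalence relation, compatible
with concatenation on both sides, and has finitely many classes (i.e. there is a
finite set of words meeting every class). -/
theorem stmt5 {A : Type*} [Fintype A] [DecidableEq A] (n : ℕ) (hn : 1 ≤ n)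
    (R : List A → List A → Prop)
    (hR : ∀ u v, R u v ↔ ∀ w : List A, w.length ≤ n →
      (List.Sublist w u ↔ List.Sublist w v)) :
    Equivalence R ∧
    (∀ u₁ v₁ u₂ v₂, R u₁ v₁ → R u₂ v₂ → R (u₁ ++ u₂) (v₁ ++ v₂)) ∧
    (∃ T : Finset (List A), ∀ u : List A, ∃ v ∈ T, R u v) := by
  classical
  refine ⟨⟨?_, ?_, ?_⟩, ?_, ?_⟩
  · intro u; rw [hR]; intro w _; rfl
  · intro u v h; rw [hR] at *; intro w hw; exact (h w hw).symm
  · intro u v t h1 h2; rw [hR] at *; intro w hw; exact (h1 w hw).trans (h2 w hw)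
  · intro u₁ v₁ u₂ v₂ h1 h2
    rw [hR] at *
    intro w hw
    rw [List.sublist_append_iff, List.sublist_append_iff]
    constructor
    · rintro ⟨l₁, l₂, rfl, s1, s2⟩
      refine ⟨l₁, l₂, rfl, ?_, ?_⟩
      · exact (h1 l₁ (le_trans (by simp) hw)).mp s1
      · exact (h2 l₂ (le_trans (by simp) hw)).mp s2
    · rintro ⟨l₁, l₂, rfl, s1, s2⟩
      refine ⟨l₁, l₂, rfl, ?_, ?_⟩
      · exact (h1 l₁ (le_trans (by simp) hw)).mpr s1
      · exact (h2 l₂ (le_trans (by simp) hw)).mpr s2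
  · -- finite index
    set f : List A → Finset (List A) :=
      fun u => u.sublists.toFinset.filter (fun w => w.length ≤ n) with hf
    have hfR : ∀ u v, f u = f v → R u v := by
      intro u v h
      rw [hR]
      intro w hw
      constructor
      · intro hs
        have : w ∈ f u := by simp [hf, List.mem_sublists, hs, hw]
        rw [h] at this
        simpa [hf, List.mem_sublists, hw] using this
      · intro hs
        have : w ∈ f v := by simp [hf, List.mem_sublists, hs, hw]
        rw [← h] at this
        simpa [hf, List.mem_sublists, hw] using this
    have hfin : (Set.range f).Finite := by
      have h1 := (List.finite_length_le A n).finite_subsets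
      apply Set.Finite.of_finite_image
        (f := fun S : Finset (List A) => (↑S : Set (List A)))
      · apply h1.subset
        rintro _ ⟨_, ⟨u, rfl⟩, rfl⟩
        intro w hw
        simp only [hf, Finset.coe_filter, List.mem_toFinset, Set.mem_setOf_eq] at hw
        exact hw.2
      · exact Finset.coe_injective.injOn
    let rep : Finset (List A) → List A :=
      fun S => if h : ∃ u, f u = S then h.choose else []
    refine ⟨hfin.toFinset.image rep, fun u => ⟨rep (f u), ?_, ?_⟩⟩
    · exact Finset.mem_image_of_mem rep (by simp [hfin])
    · have hex : ∃ v, f v = f u := ⟨u, rfl⟩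
      have : f (rep (f u)) = f u := by
        simp only [rep, dif_pos hex]
        exact hex.choose_spec
      exact hfR u _ this.symm
end

section
/- If a position p in a word u is defined by some ranker r ∈ R̲^X_{m,n} (i.e., r(u) = p), then there exists a ranker s ∈ R̲^X_{m,n} that is condensed on u with s(u) = p. The dual statement holds for R̲^Y_{m,n}. -/
namespace Rankers

/-- Ranker letters: `X a` means "go to the next `a` to the right",
`Y a` means "go to the next `a` to the left". -/
inductive RL (A : Type*) where
  | X : A → RL A
  | Y : A → RL A

variable {A : Type*} [DecidableEq A]

/-- The least position `i` (1-based) with `q < i` and `u[i] = a`, if any. -/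
def posX (u : List A) (a : A) (q : ℕ) : Option ℕ :=
  (((List.range u.length).map (· + 1)).filter
    (fun i => decide (q < i ∧ u[i - 1]? = some a))).head?

/-- The greatest position `i` (1-based) with `i < q` and `u[i] = a`, if any. -/
def posY (u : List A) (a : A) (q : ℕ) : Option ℕ :=
  (((List.range u.length).map (· + 1)).filter
    (fun i => decide (i < q ∧ u[i - 1]? = some a))).getLast?

def rstep (u : List A) : RL A → ℕ → Option ℕ
  | RL.X a, q => posX u a q
  | RL.Y a, q => posY u a q

def evalFrom (u : List A) : List (RL A) → ℕ → Option ℕ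
  | [], q => some q
  | z :: r, q => (rstep u z q).bind (evalFrom u r)

/-- Starting position of a ranker: `0` for `X`-rankers, `|u|+1` for `Y`-rankers. -/
def rstart (u : List A) : List (RL A) → ℕ
  | RL.X _ :: _ => 0
  | _ => u.length + 1

/-- Evaluation `r(u)` of a ranker on a word. -/
def reval (u : List A) (r : List (RL A)) : Option ℕ := evalFrom u r (rstart u r)

/-- The ranker `r` is defined on `u`; `L(r) = {u | RDefined u r}`. -/
def RDefined (u : List A) (r : List (RL A)) : Prop := (reval u r).isSome

/-- The zooming-in chain of the Kufleitner-Weil "condensed" condition, with current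
open interval `(i,j)`.  An `X`-step is evaluated from `i`, a `Y`-step from `j`,
the new position must lie strictly inside `(i,j)`, and the interval is updated
according to the direction of the next letter. -/
def Cond (u : List A) : List (RL A) → ℕ → ℕ → Prop
  | [], _, _ => True
  | RL.X a :: r, i, j =>
      ∃ q, posX u a i = some q ∧ q < j ∧
        (match r with
         | RL.Y _ :: _ => Cond u r i q
         | _ => Cond u r q j)
  | RL.Y a :: r, i, j =>
      ∃ q, posY u a j = some q ∧ i < q ∧
        (match r with
         | RL.X _ :: _ => Cond u r q j
         | _ => Cond u r i q)

/-- The ranker `r` is condensed on `u`; `L_c(r) = {u | Condensed u r}`. -/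
def Condensed (u : List A) (r : List (RL A)) : Prop :=
  r ≠ [] ∧ Cond u r 0 (u.length + 1)


def isXletter : RL A → Bool
  | RL.X _ => true
  | RL.Y _ => false

/-- Number of blocks (maximal runs of `X`-letters or of `Y`-letters) of a ranker. -/
def nBlocks (r : List (RL A)) : ℕ := ((r.map isXletter).destutter (· ≠ ·)).length

def startsX : List (RL A) → Prop
  | RL.X _ :: _ => True
  | _ => False

def startsY : List (RL A) → Prop
  | RL.Y _ :: _ => True
  | _ => False

/-- Membership in `R̲^X_{m,n} = ⋃_{n'≤n} R^X_{m,n'} ∪ ⋃_{m'<m, n'<n} R_{m',n'}`: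
either depth `≤ n`, exactly `m` blocks and starting with an `X`-block, or fewer
than `m` blocks and depth `< n`. -/
def memRX (m n : ℕ) (r : List (RL A)) : Prop :=
  r ≠ [] ∧ ((r.length ≤ n ∧ nBlocks r = m ∧ startsX r) ∨ (nBlocks r < m ∧ r.length < n))

/-- Membership in `R̲^Y_{m,n}` (the dual class). -/
def memRY (m n : ℕ) (r : List (RL A)) : Prop :=
  r ≠ [] ∧ ((r.length ≤ n ∧ nBlocks r = m ∧ startsY r) ∨ (nBlocks r < m ∧ r.length < n))

/-- `u ▷_{m,n} v`: agreement on condensed rankers from `R̲^X_{m,n}`. -/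
def triR (m n : ℕ) (u v : List A) : Prop :=
  ∀ r : List (RL A), memRX m n r → (Condensed u r ↔ Condensed v r)

/-- `u ◁_{m,n} v`: agreement on condensed rankers from `R̲^Y_{m,n}`. -/
def triL (m n : ℕ) (u v : List A) : Prop :=
  ∀ r : List (RL A), memRY m n r → (Condensed u r ↔ Condensed v r)

/-!
Evaluate `r` letter by letter while maintaining the open interval of the condensed chain. Each
endpoint of the interval is a boundary (`0` or `|u| + 1`) or the position reached by a nonempty
prefix of `r`. If a step leaves the interval, say an `X a`-step from `c` overshoots the right
endpoint `j`, then `c < j` and the next `a` after `j` is the same position, so everything between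
that prefix and the step can be dropped (the step too, if it lands exactly on `j`). This gives a
strictly shorter subword of `r` with the same first letter and the same value; iterating ends in
a condensed ranker. Such a subword stays in `R̲^X_{m,n}` (resp. `R̲^Y_{m,n}`): it has at most as
many blocks as `r`, and if it has fewer it is a proper subword, hence strictly shorter.
-/

section Lists

open List

variable {α : Type*} {R : α → α → Prop} {l : List α} {a : α}

theorem _root_.List.head?_eq_some_iff_of_pairwise [Std.Asymm R] (hl : l.Pairwise R) :
    l.head? = some a ↔ a ∈ l ∧ ∀ b ∈ l, ¬R b a := by
  cases l with
  | nil => simp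
  | cons c l =>
    rw [pairwise_cons] at hl
    simp only [head?_cons, Option.some_inj, mem_cons, forall_eq_or_imp]
    constructor
    · rintro rfl
      exact ⟨Or.inl rfl, fun h => Std.Asymm.asymm _ _ h h,
        fun b hb => Std.Asymm.asymm _ _ (hl.1 b hb)⟩
    · rintro ⟨rfl | ha, hc, -⟩
      · rfl
      · exact absurd (hl.1 a ha) hc

theorem _root_.List.getLast?_eq_some_iff_of_pairwise [Std.Asymm R] (hl : l.Pairwise R) :
    l.getLast? = some a ↔ a ∈ l ∧ ∀ b ∈ l, ¬R a b := by
  have : Std.Asymm (fun a b => R b a) := ⟨fun a b h => Std.Asymm.asymm _ _ h⟩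
  rw [getLast?_eq_head?_reverse, head?_eq_some_iff_of_pairwise (pairwise_reverse.mpr hl)]
  simp only [mem_reverse]

theorem _root_.List.pairwise_lt_map_succ_range (n : ℕ) :
    ((range n).map (· + 1)).Pairwise (· < ·) :=
  pairwise_map.mpr (pairwise_lt_range.imp Nat.succ_lt_succ)

theorem _root_.List.mem_map_succ_range {n t : ℕ} :
    t ∈ (range n).map (· + 1) ↔ 0 < t ∧ t ≤ n := by
  simp only [mem_map, mem_range]
  constructor
  · rintro ⟨k, hk, rfl⟩
    omega
  · intro ht
    exact ⟨t - 1, by omega, by omega⟩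

theorem _root_.List.mem_map_succ_range_of_getElem?_eq_some {t : ℕ} (ht : 0 < t)
    (h : l[t - 1]? = some a) :
    t ∈ (range l.length).map (· + 1) :=
  mem_map_succ_range.mpr ⟨ht, by have := (List.getElem?_eq_some_iff.mp h).1; omega⟩

end Lists

section Letters

variable {A : Type*} {u : List A} {s r : List (RL A)}

lemma startsX_iff_of_head?_eq (h : s.head? = r.head?) : startsX s ↔ startsX r := by
  rcases s with _ | ⟨_ | _, _⟩ <;> rcases r with _ | ⟨_ | _, _⟩ <;> simp_all [startsX]

lemma startsY_iff_of_head?_eq (h : s.head? = r.head?) : startsY s ↔ startsY r := by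
  rcases s with _ | ⟨_ | _, _⟩ <;> rcases r with _ | ⟨_ | _, _⟩ <;> simp_all [startsY]

lemma not_startsY_of_startsX (h : startsX r) : ¬startsY r := by
  rcases r with _ | ⟨_ | _, _⟩ <;> simp_all [startsX, startsY]

lemma rstart_eq_of_head?_eq (h : s.head? = r.head?) : rstart u s = rstart u r := by
  rcases s with _ | ⟨_ | _, _⟩ <;> rcases r with _ | ⟨_ | _, _⟩ <;> simp_all [rstart]

lemma rstart_of_startsX (h : startsX r) : rstart u r = 0 := by
  rcases r with _ | ⟨_ | _, _⟩ <;> simp_all [startsX, rstart]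

lemma rstart_of_startsY (h : startsY r) : rstart u r = u.length + 1 := by
  rcases r with _ | ⟨_ | _, _⟩ <;> simp_all [startsY, rstart]

lemma nBlocks_le_of_sublist (h : s.Sublist r) : nBlocks s ≤ nBlocks r :=
  List.IsChain.length_le_length_destutter_ne
    ((List.destutter_sublist _ _).trans (h.map isXletter)) (List.isChain_destutter _ _)

lemma nBlocks_eq_or_lt_of_sublist {n : ℕ} (h : s.Sublist r) (hn : r.length ≤ n) :
    nBlocks s = nBlocks r ∨ (nBlocks s < nBlocks r ∧ s.length < n) := by
  rcases (nBlocks_le_of_sublist h).lt_or_eq with hlt | heq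
  · have hlen : s.length ≠ r.length := by
      intro hlen
      rw [h.eq_of_length hlen] at hlt
      exact lt_irrefl _ hlt
    exact Or.inr ⟨hlt, by have := h.length_le; omega⟩
  · exact Or.inl heq

variable {m n : ℕ}

lemma memRX_of_sublist (h : s.Sublist r) (hhead : s.head? = r.head?) (hr : memRX m n r) :
    memRX m n s := by
  obtain ⟨hne, ⟨hn, rfl, hX⟩ | ⟨hm, hn⟩⟩ := hr
  all_goals refine ⟨fun hs => hne (List.head?_eq_none_iff.mp (hs ▸ hhead).symm), ?_⟩
  · rcases nBlocks_eq_or_lt_of_sublist h hn with heq | hlt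
    · exact Or.inl ⟨h.length_le.trans hn, heq, (startsX_iff_of_head?_eq hhead).mpr hX⟩
    · exact Or.inr hlt
  · exact Or.inr ⟨(nBlocks_le_of_sublist h).trans_lt hm, h.length_le.trans_lt hn⟩

lemma memRY_of_sublist (h : s.Sublist r) (hhead : s.head? = r.head?) (hr : memRY m n r) :
    memRY m n s := by
  obtain ⟨hne, ⟨hn, rfl, hY⟩ | ⟨hm, hn⟩⟩ := hr
  all_goals refine ⟨fun hs => hne (List.head?_eq_none_iff.mp (hs ▸ hhead).symm), ?_⟩
  · rcases nBlocks_eq_or_lt_of_sublist h hn with heq | hlt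
    · exact Or.inl ⟨h.length_le.trans hn, heq, (startsY_iff_of_head?_eq hhead).mpr hY⟩
    · exact Or.inr hlt
  · exact Or.inr ⟨(nBlocks_le_of_sublist h).trans_lt hm, h.length_le.trans_lt hn⟩

end Letters

section Evaluation

variable {u : List A} {a : A} {c j q : ℕ}

lemma posX_eq_some_iff : posX u a c = some q ↔ IsLeast {t | c < t ∧ u[t - 1]? = some a} q := by
  rw [posX, List.head?_eq_some_iff_of_pairwise ((List.pairwise_lt_map_succ_range _).filter _)]
  simp only [List.mem_filter, decide_eq_true_eq, IsLeast, lowerBounds, Set.mem_ofPred_eq, not_lt]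
  constructor
  · rintro ⟨⟨-, hq⟩, hmin⟩
    exact ⟨hq, fun t ht =>
      hmin t ⟨List.mem_map_succ_range_of_getElem?_eq_some (by omega) ht.2, ht⟩⟩
  · rintro ⟨hq, hmin⟩
    exact ⟨⟨List.mem_map_succ_range_of_getElem?_eq_some (by omega) hq.2, hq⟩,
      fun t ht => hmin ht.2⟩

/-- The condition `0 < t` matters: `u[0 - 1]? = u[0]?`. -/
lemma posY_eq_some_iff :
    posY u a c = some q ↔ IsGreatest {t | 0 < t ∧ t < c ∧ u[t - 1]? = some a} q := by
  rw [posY, List.getLast?_eq_some_iff_of_pairwise ((List.pairwise_lt_map_succ_range _).filter _)]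
  simp only [List.mem_filter, decide_eq_true_eq, IsGreatest, upperBounds, Set.mem_ofPred_eq,
    not_lt]
  constructor
  · rintro ⟨⟨hmem, hq⟩, hmax⟩
    exact ⟨⟨(List.mem_map_succ_range.mp hmem).1, hq⟩,
      fun t ht => hmax t ⟨List.mem_map_succ_range_of_getElem?_eq_some ht.1 ht.2.2, ht.2⟩⟩
  · rintro ⟨⟨hpos, hq⟩, hmax⟩
    exact ⟨⟨List.mem_map_succ_range_of_getElem?_eq_some hpos hq.2, hq⟩,
      fun t ht => hmax ⟨(List.mem_map_succ_range.mp ht.1).1, ht.2⟩⟩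

lemma lt_of_posX_eq_some (hq : posX u a c = some q) : c < q :=
  (posX_eq_some_iff.mp hq).1.1

lemma le_length_of_posX_eq_some (hq : posX u a c = some q) : q ≤ u.length := by
  have := (List.getElem?_eq_some_iff.mp (posX_eq_some_iff.mp hq).1.2).1
  omega

lemma posX_eq_some_of_le (hq : posX u a c = some q) (hcj : c ≤ j) (hjq : j < q) :
    posX u a j = some q := by
  obtain ⟨⟨-, hqa⟩, hmin⟩ := posX_eq_some_iff.mp hq
  exact posX_eq_some_iff.mpr ⟨⟨hjq, hqa⟩, fun t ht => hmin ⟨hcj.trans_lt ht.1, ht.2⟩⟩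

lemma lt_of_posY_eq_some (hq : posY u a c = some q) : q < c :=
  (posY_eq_some_iff.mp hq).1.2.1

lemma pos_of_posY_eq_some (hq : posY u a c = some q) : 0 < q :=
  (posY_eq_some_iff.mp hq).1.1

lemma posY_eq_some_of_le (hq : posY u a c = some q) (hjc : j ≤ c) (hqj : q < j) :
    posY u a j = some q := by
  obtain ⟨⟨hpos, -, hqa⟩, hmax⟩ := posY_eq_some_iff.mp hq
  exact posY_eq_some_iff.mpr ⟨⟨hpos, hqj, hqa⟩,
    fun t ht => hmax ⟨ht.1, ht.2.1.trans_le hjc, ht.2.2⟩⟩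

lemma evalFrom_append (r s : List (RL A)) (c : ℕ) :
    evalFrom u (r ++ s) c = (evalFrom u r c).bind (evalFrom u s) := by
  induction r generalizing c with
  | nil => rfl
  | cons z r ih =>
    simp only [List.cons_append, evalFrom, ih, Option.bind_assoc]

def HasShortening (u : List A) (st : ℕ) (r : List (RL A)) (p : ℕ) : Prop :=
  ∃ s, s.Sublist r ∧ s.length < r.length ∧ s.head? = r.head? ∧ evalFrom u s st = some p

/-- `k` is an admissible endpoint of the interval after reading `pre`: the boundary `b`, or the
value of a nonempty prefix of `pre`, from which a step overshooting `k` can be restarted. -/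
def IsAnchor (u : List A) (st : ℕ) (pre : List (RL A)) (b k : ℕ) : Prop :=
  k = b ∨ ∃ pk, pk <+: pre ∧ pk ≠ [] ∧ evalFrom u pk st = some k

variable {st p i k : ℕ} {pre pre' r : List (RL A)}

lemma IsAnchor.mono {b : ℕ} (h : IsAnchor u st pre b k) (hpre : pre <+: pre') :
    IsAnchor u st pre' b k :=
  h.imp_right fun ⟨pk, hpk, hne, hk⟩ => ⟨pk, hpk.trans hpre, hne, hk⟩

lemma isAnchor_of_evalFrom {b : ℕ} (hne : pre ≠ []) (h : evalFrom u pre st = some k) :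
    IsAnchor u st pre b k :=
  Or.inr ⟨pre, List.prefix_refl pre, hne, h⟩

lemma hasShortening_of_prefix {pk : List (RL A)} {z : RL A} (hpk : pk <+: pre) (hne : pk ≠ [])
    (hpre : evalFrom u pre st = some c) (hk : evalFrom u pk st = some k) (hkc : k ≠ c)
    (hkq : k = q ∨ rstep u z k = some q) (hr : evalFrom u r q = some p) :
    HasShortening u st (pre ++ z :: r) p := by
  obtain ⟨t, rfl⟩ := hpk
  have ht : t ≠ [] := by
    rintro rfl
    rw [List.append_nil, hk] at hpre
    exact hkc (Option.some_inj.mp hpre)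
  have hhead (s : List (RL A)) : (pk ++ s).head? = (pk ++ t ++ z :: r).head? := by
    rw [List.append_assoc, List.head?_append_of_ne_nil _ hne, List.head?_append_of_ne_nil _ hne]
  have hlen (s : List (RL A)) (hs : s.length ≤ (z :: r).length) :
      (pk ++ s).length < (pk ++ t ++ z :: r).length := by
    have := List.length_pos_of_ne_nil ht
    simp only [List.length_append] at this ⊢
    omega
  rcases hkq with rfl | hstep
  · refine ⟨pk ++ r, ?_, hlen r (Nat.le_succ _), hhead r, ?_⟩
    · rw [List.append_assoc]
      exact ((List.sublist_cons_self z r).trans (List.sublist_append_right t _)).append_left pk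
    · rw [evalFrom_append, hk]
      exact hr
  · refine ⟨pk ++ z :: r, ?_, hlen _ le_rfl, hhead _, ?_⟩
    · rw [List.append_assoc]
      exact (List.sublist_append_right t _).append_left pk
    · rw [evalFrom_append, hk]
      exact (Option.bind_eq_some_iff (x := rstep u z k)).mpr ⟨q, hstep, hr⟩

lemma hasShortening_of_posX_ge (hpre : evalFrom u pre st = some c) (hq : posX u a c = some q)
    (hcj : c < j) (hjq : j ≤ q) (hj : IsAnchor u st pre (u.length + 1) j)
    (hr : evalFrom u r q = some p) : HasShortening u st (pre ++ RL.X a :: r) p := by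
  obtain rfl | ⟨pj, hpj, hne, hj⟩ := hj
  · exact absurd (le_length_of_posX_eq_some hq) (by omega)
  refine hasShortening_of_prefix hpj hne hpre hj hcj.ne' ?_ hr
  rcases hjq.eq_or_lt with rfl | hjq
  · exact Or.inl rfl
  · exact Or.inr (posX_eq_some_of_le hq hcj.le hjq)

lemma hasShortening_of_posY_le (hpre : evalFrom u pre st = some c) (hq : posY u a c = some q)
    (hic : i < c) (hqi : q ≤ i) (hi : IsAnchor u st pre 0 i)
    (hr : evalFrom u r q = some p) : HasShortening u st (pre ++ RL.Y a :: r) p := by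
  obtain rfl | ⟨pi, hpi, hne, hi⟩ := hi
  · exact absurd (pos_of_posY_eq_some hq) hqi.not_gt
  refine hasShortening_of_prefix hpi hne hpre hi hic.ne ?_ hr
  rcases hqi.eq_or_lt with rfl | hqi
  · exact Or.inl rfl
  · exact Or.inr (posY_eq_some_of_le hq hic.le hqi)

lemma cond_X_cons_of_startsY (hr : startsY r) (hq : posX u a i = some q) (hqj : q < j)
    (h : Cond u r i q) : Cond u (RL.X a :: r) i j := by
  rcases r with _ | ⟨_ | _, _⟩
  all_goals first | exact hr.elim | exact ⟨q, hq, hqj, h⟩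

lemma cond_X_cons_of_not_startsY (hr : ¬startsY r) (hq : posX u a i = some q) (hqj : q < j)
    (h : Cond u r q j) : Cond u (RL.X a :: r) i j := by
  rcases r with _ | ⟨_ | _, _⟩
  all_goals first | exact (hr trivial).elim | exact ⟨q, hq, hqj, h⟩

lemma cond_Y_cons_of_startsX (hr : startsX r) (hq : posY u a j = some q) (hiq : i < q)
    (h : Cond u r q j) : Cond u (RL.Y a :: r) i j := by
  rcases r with _ | ⟨_ | _, _⟩
  all_goals first | exact hr.elim | exact ⟨q, hq, hiq, h⟩

lemma cond_Y_cons_of_not_startsX (hr : ¬startsX r) (hq : posY u a j = some q) (hiq : i < q)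
    (h : Cond u r i q) : Cond u (RL.Y a :: r) i j := by
  rcases r with _ | ⟨_ | _, _⟩
  all_goals first | exact (hr trivial).elim | exact ⟨q, hq, hiq, h⟩

theorem cond_or_hasShortening {rest pre : List (RL A)} {c i j : ℕ}
    (hpre : evalFrom u pre st = some c) (hiX : startsX rest → i = c) (hjY : startsY rest → j = c)
    (hij : i < j) (hi : IsAnchor u st pre 0 i) (hj : IsAnchor u st pre (u.length + 1) j)
    (hrest : evalFrom u rest c = some p) :
    Cond u rest i j ∨ HasShortening u st (pre ++ rest) p := by
  induction rest generalizing pre c i j with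
  | nil => exact Or.inl trivial
  | cons z r ih =>
    obtain ⟨q, hq, hr⟩ := Option.bind_eq_some_iff.mp hrest
    have hpre' : evalFrom u (pre ++ [z]) st = some q := by
      rw [evalFrom_append, hpre]
      exact (Option.bind_eq_some_iff (x := rstep u z c)).mpr ⟨q, hq, rfl⟩
    have hext : pre <+: pre ++ [z] := List.prefix_append pre [z]
    have hq' {b : ℕ} : IsAnchor u st (pre ++ [z]) b q := isAnchor_of_evalFrom (by simp) hpre'
    have hrec {i' j' : ℕ} (hiX' : startsX r → i' = q) (hjY' : startsY r → j' = q)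
        (hij' : i' < j') (hi' : IsAnchor u st (pre ++ [z]) 0 i')
        (hj' : IsAnchor u st (pre ++ [z]) (u.length + 1) j') :
        Cond u r i' j' ∨ HasShortening u st (pre ++ z :: r) p := by
      rw [List.append_cons]
      exact ih hpre' hiX' hjY' hij' hi' hj' hr
    cases z with
    | X a =>
      obtain rfl : i = c := hiX trivial
      by_cases hqj : q < j
      · by_cases hY : startsY r
        · exact (hrec (fun hX => absurd hY (not_startsY_of_startsX hX)) (fun _ => rfl)
            (lt_of_posX_eq_some hq) (hi.mono hext) hq').imp_left
            (cond_X_cons_of_startsY hY hq hqj)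
        · exact (hrec (fun _ => rfl) (fun h => absurd h hY) hqj hq' (hj.mono hext)).imp_left
            (cond_X_cons_of_not_startsY hY hq hqj)
      · exact Or.inr (hasShortening_of_posX_ge hpre hq hij (not_lt.mp hqj) hj hr)
    | Y a =>
      obtain rfl : j = c := hjY trivial
      by_cases hiq : i < q
      · by_cases hX : startsX r
        · exact (hrec (fun _ => rfl) (fun hY => absurd hY (not_startsY_of_startsX hX))
            (lt_of_posY_eq_some hq) hq' (hj.mono hext)).imp_left
            (cond_Y_cons_of_startsX hX hq hiq)
        · exact (hrec (fun h => absurd h hX) (fun _ => rfl) hiq (hi.mono hext) hq').imp_left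
            (cond_Y_cons_of_not_startsX hX hq hiq)
      · exact Or.inr (hasShortening_of_posY_le hpre hq hij (not_lt.mp hiq) hi hr)

theorem exists_condensed_sublist {r : List (RL A)} (hr : r ≠ []) (hp : reval u r = some p) :
    ∃ s, s.Sublist r ∧ s.head? = r.head? ∧ Condensed u s ∧ reval u s = some p := by
  induction hn : r.length using Nat.strong_induction_on generalizing r with
  | _ n ih =>
    rcases cond_or_hasShortening (pre := []) rfl (fun hX => (rstart_of_startsX hX).symm)
        (fun hY => (rstart_of_startsY hY).symm) (Nat.succ_pos _) (Or.inl rfl) (Or.inl rfl) hp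
      with hc | ⟨s, hsub, hlen, hhead, hs⟩
    · exact ⟨r, List.Sublist.refl r, rfl, ⟨hr, hc⟩, hp⟩
    · rw [List.nil_append] at hsub hlen hhead
      have hs' : reval u s = some p := by rwa [reval, rstart_eq_of_head?_eq hhead]
      have hs_ne : s ≠ [] := fun h => hr (List.head?_eq_none_iff.mp (h ▸ hhead).symm)
      obtain ⟨s', hsub', hhead', hcond, hs''⟩ := ih s.length (hn ▸ hlen) hs_ne hs' rfl
      exact ⟨s', hsub'.trans hsub, hhead'.trans hhead, hcond, hs''⟩

end Evaluation

/-- If a position `p` of `u` is defined by a ranker `r ∈ R̲^X_{m,n}`, then some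
ranker `s ∈ R̲^X_{m,n}` is condensed on `u` and defines the same position `p`;
dually for `R̲^Y_{m,n}`. -/
theorem stmt10 {A : Type*} [DecidableEq A] (m n : ℕ) (u : List A) (p : ℕ) :
    (∀ r : List (RL A), memRX m n r → reval u r = some p →
      ∃ s : List (RL A), memRX m n s ∧ Condensed u s ∧ reval u s = some p) ∧
    (∀ r : List (RL A), memRY m n r → reval u r = some p →
      ∃ s : List (RL A), memRY m n s ∧ Condensed u s ∧ reval u s = some p) := by
  constructor
  · intro r hr hp
    obtain ⟨s, hsub, hhead, hcond, hs⟩ := exists_condensed_sublist hr.1 hp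
    exact ⟨s, memRX_of_sublist hsub hhead hr, hcond, hs⟩
  · intro r hr hp
    obtain ⟨s, hsub, hhead, hcond, hs⟩ := exists_condensed_sublist hr.1 hp
    exact ⟨s, memRY_of_sublist hsub hhead hr, hcond, hs⟩

end Rankers
end

section
/- Let M be a finite monoid satisfying (xy)^ω x (xy)^ω = (xy)^ω for all x,y ∈ M (i.e., M ∈ DA), let γ : A* → M be a morphism, let u, v ∈ A* and a ∈ A with a occurring in v. If γ(u) R γ(uv) then γ(uva) R γ(u), where R denotes Green's R-relation (s R t iff sM = tM). -/
/-- The unique idempotent power `s^ω` of an element of a finite monoid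
(`s^(card M)!` is idempotent). -/
noncomputable def omegaPow {M : Type*} [Monoid M] [Fintype M] (s : M) : M :=
  s ^ (Nat.factorial (Fintype.card M))

/-- `s R t` for Green's relation `R`: `sM = tM`. -/
def GreenR {M : Type*} [Monoid M] (s t : M) : Prop :=
  Set.range (fun x => s * x) = Set.range (fun x => t * x)

/-!
Write `uv = r` in `M` and `v = p a q`. From `γ(u) R r` we get `z` with `r z = γ(u)`, hence
`r · (zp) a q = r`. In `DA`, whenever `r · y c y' = r` `c` can be appended without
leaving the `R`-class of `r`: with `g = (c y' y)^ω` the element `E = g c y'` is an idempotent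
fixing `r y` on the right, and `E` begins with `c`, so `E c E = E` by the `DA` identity. Then
`r = (r y) E = (r y) E c E = r c E`.
-/

theorem FreeMonoid.exists_eq_mul_of_mem_toList {A : Type*} {v : FreeMonoid A} {a : A}
    (ha : a ∈ v.toList) : ∃ p q : FreeMonoid A, v = p * of a * q := by
  obtain ⟨l₁, l₂, hl⟩ := List.append_of_mem ha
  refine ⟨ofList l₁, ofList l₂, ?_⟩
  rw [← ofList_toList v, hl, ofList_append, ofList_cons, mul_assoc]

section GreenR

variable {M : Type*} [Monoid M] {s t c : M}

theorem GreenR.symm (h : GreenR s t) : GreenR t s := Eq.symm h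

theorem GreenR.trans {u : M} (h₁ : GreenR s t) (h₂ : GreenR t u) : GreenR s u :=
  Eq.trans h₁ h₂

theorem GreenR.exists_mul_eq (h : GreenR s t) : ∃ z, t * z = s := by
  have hs : s ∈ Set.range (t * ·) := by
    rw [← h]
    exact ⟨1, mul_one s⟩
  exact hs

theorem greenR_mul_of_mul_mul_eq {w : M} (h : s * c * w = s) : GreenR (s * c) s := by
  ext x
  constructor
  · rintro ⟨y, rfl⟩
    exact ⟨c * y, (mul_assoc s c y).symm⟩
  · rintro ⟨y, rfl⟩
    exact ⟨w * y, show s * c * (w * y) = s * y by rw [← mul_assoc, h]⟩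

end GreenR

theorem mul_pow_eq_self_of_mul_eq_self {M : Type*} [Monoid M] {r s : M} (h : r * s = r)
    (n : ℕ) : r * s ^ n = r := by
  induction n with
  | zero => rw [pow_zero, mul_one]
  | succ n ih => rw [pow_succ, ← mul_assoc, ih, h]

section OmegaPow

variable {M : Type*} [Monoid M] [Fintype M]

theorem exists_omegaPow_eq_mul (s : M) : ∃ t, omegaPow s = s * t :=
  ⟨s ^ ((Fintype.card M).factorial - 1), by
    rw [omegaPow, ← pow_succ', Nat.sub_add_cancel (Nat.factorial_pos _)]⟩

theorem IsIdempotentElem.omegaPow_eq {e : M} (he : IsIdempotentElem e) : omegaPow e = e :=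
  he.pow_eq (Nat.factorial_ne_zero _)

theorem mul_omegaPow_eq_self_of_mul_eq_self {r s : M} (h : r * s = r) : r * omegaPow s = r :=
  mul_pow_eq_self_of_mul_eq_self h _

end OmegaPow

def IsDA (M : Type*) [Monoid M] [Fintype M] : Prop :=
  ∀ x y : M, omegaPow (x * y) * x * omegaPow (x * y) = omegaPow (x * y)

namespace IsDA

variable {M : Type*} [Monoid M] [Fintype M]

theorem idempotent_mul_mul_eq (hDA : IsDA M) {e x t : M} (he : IsIdempotentElem e)
    (hxt : e = x * t) : e * x * e = e := by
  have h := hDA x t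
  rwa [← hxt, he.omegaPow_eq] at h

theorem greenR_mul_of_mul_eq (hDA : IsDA M) {r y c y' : M} (h : r * (y * c * y') = r) :
    GreenR (r * c) r := by
  set g := omegaPow (c * y' * y)
  have hg : g * (c * y') * g = g := hDA (c * y') y
  have hry : r * y * g = r * y :=
    mul_omegaPow_eq_self_of_mul_eq_self (by simpa only [mul_assoc] using congrArg (· * y) h)
  set E := g * c * y'
  have hE : IsIdempotentElem E := by
    show g * c * y' * (g * c * y') = g * c * y'
    simp only [← mul_assoc] at hg ⊢
    rw [hg]
  obtain ⟨t, ht⟩ : ∃ t, g = c * y' * y * t := exists_omegaPow_eq_mul _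
  have hEc : E * c * E = E :=
    hDA.idempotent_mul_mul_eq hE (t := y' * y * t * c * y') (by simp only [E, ht, mul_assoc])
  have hryE : r * y * E = r := by
    calc r * y * E = r * y * g * c * y' := by simp only [E, mul_assoc]
      _ = r := by rw [hry]; simpa only [mul_assoc] using h
  refine greenR_mul_of_mul_mul_eq (w := E) ?_
  calc r * c * E = r * y * E * c * E := by rw [hryE]
    _ = r * y * (E * c * E) := by simp only [mul_assoc]
    _ = r := by rw [hEc, hryE]

end IsDA

/-- Let `M` be a finite monoid in `DA`, `γ : A* → M` a morphism, `u, v` words and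
`a` a letter occurring in `v`.  If `γ(u) R γ(uv)` then `γ(uva) R γ(u)`. -/
theorem stmt11 {M : Type*} [Monoid M] [Fintype M] {A : Type*}
    (hDA : ∀ x y : M, omegaPow (x * y) * x * omegaPow (x * y) = omegaPow (x * y))
    (γ : FreeMonoid A →* M) (u v : FreeMonoid A) (a : A)
    (ha : a ∈ FreeMonoid.toList v)
    (h : GreenR (γ u) (γ (u * v))) :
    GreenR (γ (u * v * FreeMonoid.of a)) (γ u) := by
  obtain ⟨p, q, rfl⟩ := FreeMonoid.exists_eq_mul_of_mem_toList ha
  obtain ⟨z, hz⟩ := h.exists_mul_eq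
  have hloop : γ (u * (p * .of a * q)) * (z * γ p * γ (.of a) * γ q) =
      γ (u * (p * .of a * q)) := by
    simp only [map_mul, ← mul_assoc] at hz ⊢
    rw [hz]
  rw [map_mul γ _ (.of a)]
  exact (IsDA.greenR_mul_of_mul_eq hDA hloop).trans h.symm
end

section
/- A finite monoid M satisfies the identity (st)^ω s = (st)^ω for all s, t ∈ M if and only if M is in DA (i.e., satisfies (xy)^ω x (xy)^ω = (xy)^ω for all x,y) and satisfies x₂^ω (x₁^ω x₂^ω x₁^ω)^ω = x₂^ω (x₁^ω x₂^ω x₁^ω)^ω x₂^ω for all x₁, x₂ ∈ M. -/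
private lemma omegaPow_mul_self {M : Type*} [Monoid M] [Fintype M] (s : M) :
    omegaPow s * omegaPow s = omegaPow s := by
  classical
  -- pigeonhole: two equal powers among s^0, ..., s^(card M)
  obtain ⟨a, b, hab, h⟩ :
      ∃ a b : Fin (Fintype.card M + 1), a ≠ b ∧ s ^ (a : ℕ) = s ^ (b : ℕ) := by
    obtain ⟨a, b, hab, h⟩ :=
      Fintype.exists_ne_map_eq_of_card_lt
        (fun n : Fin (Fintype.card M + 1) => s ^ (n : ℕ)) (by simp)
    exact ⟨a, b, hab, h⟩
  -- normalize to i < j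
  obtain ⟨i, j, hij, hjle, hpow⟩ :
      ∃ i j : ℕ, i < j ∧ j ≤ Fintype.card M ∧ s ^ i = s ^ j := by
    rcases lt_or_gt_of_ne hab with hlt | hlt
    · exact ⟨a, b, hlt, Nat.lt_succ_iff.mp b.isLt, h⟩
    · exact ⟨b, a, hlt, Nat.lt_succ_iff.mp a.isLt, h.symm⟩
  set r := j - i with hr
  have hrpos : 0 < r := Nat.sub_pos_of_lt hij
  have hiadd : i + r = j := by omega
  have key : ∀ m, i ≤ m → s ^ (m + r) = s ^ m := by
    intro m hm
    have hm' : m = i + (m - i) := by omega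
    calc s ^ (m + r) = s ^ (i + r + (m - i)) := by congr 1; omega
      _ = s ^ (i + r) * s ^ (m - i) := by rw [pow_add]
      _ = s ^ i * s ^ (m - i) := by rw [hiadd, hpow]
      _ = s ^ (i + (m - i)) := by rw [pow_add]
      _ = s ^ m := by rw [← hm']
  have key2 : ∀ k m, i ≤ m → s ^ (m + k * r) = s ^ m := by
    intro k
    induction k with
    | zero => simp
    | succ k ih =>
      intro m hm
      have : m + (k + 1) * r = (m + k * r) + r := by ring
      rw [this, key _ (by omega), ih m hm]
  have hrdvd : r ∣ Nat.factorial (Fintype.card M) :=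
    Nat.dvd_factorial hrpos (by omega)
  obtain ⟨k, hk⟩ := hrdvd
  have hiN : i ≤ Nat.factorial (Fintype.card M) :=
    le_trans (by omega) (Nat.self_le_factorial _)
  calc omegaPow s * omegaPow s
      = s ^ (Nat.factorial (Fintype.card M) + k * r) := by
        rw [omegaPow, ← pow_add]; congr 1
        nth_rewrite 2 [hk]; rw [Nat.mul_comm]
    _ = s ^ Nat.factorial (Fintype.card M) := key2 k _ hiN
    _ = omegaPow s := rfl

private lemma omegaPow_of_idem {M : Type*} [Monoid M] [Fintype M] {x : M}
    (h : x * x = x) : omegaPow x = x := by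
  have hN : Nat.factorial (Fintype.card M) =
      (Nat.factorial (Fintype.card M) - 1) + 1 :=
    (Nat.succ_pred_eq_of_pos (Nat.factorial_pos _)).symm
  rw [omegaPow, hN, IsIdempotentElem.pow_succ_eq _ h]

/-- A finite monoid satisfies `(st)^ω s = (st)^ω` for all `s,t` iff it lies in
`DA` (i.e. `(xy)^ω x (xy)^ω = (xy)^ω`) and satisfies
`x₂^ω (x₁^ω x₂^ω x₁^ω)^ω = x₂^ω (x₁^ω x₂^ω x₁^ω)^ω x₂^ω`. -/
theorem stmt13 {M : Type*} [Monoid M] [Fintype M] :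
    (∀ s t : M, omegaPow (s * t) * s = omegaPow (s * t)) ↔
    ((∀ x y : M, omegaPow (x * y) * x * omegaPow (x * y) = omegaPow (x * y)) ∧
      ∀ x₁ x₂ : M,
        omegaPow x₂ * omegaPow (omegaPow x₁ * omegaPow x₂ * omegaPow x₁) =
          omegaPow x₂ * omegaPow (omegaPow x₁ * omegaPow x₂ * omegaPow x₁) *
            omegaPow x₂) := by
  constructor
  · intro h
    constructor
    · intro x y
      rw [h x y, omegaPow_mul_self]
    · intro x₁ x₂
      set a := omegaPow x₁
      set b := omegaPow x₂
      have h1 : omegaPow (a * b * a) * (a * b) = omegaPow (a * b * a) := h (a * b) a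
      have h2 : omegaPow (a * b * a) * a = omegaPow (a * b * a) := by
        have := h a (b * a)
        rwa [← mul_assoc] at this
      have h3 : omegaPow (a * b * a) * b = omegaPow (a * b * a) := by
        calc omegaPow (a * b * a) * b = omegaPow (a * b * a) * a * b := by rw [h2]
          _ = omegaPow (a * b * a) * (a * b) := by rw [mul_assoc]
          _ = omegaPow (a * b * a) := h1
      rw [mul_assoc b (omegaPow (a * b * a)) b, h3]
  · rintro ⟨hDA, hX⟩ s t
    set e := omegaPow (s * t) with he_def
    have he : e * e = e := omegaPow_mul_self (s * t)
    have hese : e * s * e = e := hDA s t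
    set g := e * s with hg_def
    have hgg : g * g = g := by
      calc g * g = (e * s * e) * s := by rw [hg_def]; rw [mul_assoc, ← mul_assoc e s (e * s), ← mul_assoc]
        _ = e * s := by rw [hese]
        _ = g := rfl
    have hoe : omegaPow e = e := omegaPow_of_idem he
    have hog : omegaPow g = g := omegaPow_of_idem hgg
    have hege : e * g * e = e := by
      calc e * g * e = e * (e * s) * e := rfl
        _ = (e * e) * s * e := by rw [← mul_assoc]
        _ = e * s * e := by rw [he]
        _ = e := hese
    have hx := hX e g
    rw [hoe, hog, hege, hoe] at hx
    -- hx : g * e = g * e * g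
    have hge : g * e = e := by
      calc g * e = e * s * e := rfl
        _ = e := hese
    rw [hge] at hx
    -- hx : e = e * g
    have : e * g = g := by
      calc e * g = (e * e) * s := by rw [hg_def, ← mul_assoc]
        _ = e * s := by rw [he]
        _ = g := rfl
    -- goal : e * s = e, i.e. g = e
    show g = e
    rw [← this, ← hx]
end

section
/- Every finite monoid satisfying (st)^ω s = (st)^ω for all s, t is R-trivial: whenever sM = tM for s, t in the monoid, then s = t. -/
/-- Every finite monoid satisfying `(st)^ω s = (st)^ω` is `R`-trivial:
`sM = tM` implies `s = t`. -/
theorem stmt14 {M : Type*} [Monoid M] [Fintype M]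
    (h : ∀ s t : M, omegaPow (s * t) * s = omegaPow (s * t)) :
    ∀ s t : M, Set.range (fun x => s * x) = Set.range (fun x => t * x) → s = t := by
  intro s t hr
  obtain ⟨v, hv⟩ : ∃ v, s * v = t := by
    have ht : t ∈ Set.range (fun x => t * x) := ⟨1, by simp⟩
    rw [← hr] at ht; exact ht
  obtain ⟨u, hu⟩ : ∃ u, t * u = s := by
    have hs : s ∈ Set.range (fun x => s * x) := ⟨1, by simp⟩
    rw [hr] at hs; exact hs
  have hvu : s * (v * u) = s := by rw [← mul_assoc, hv, hu]
  have key : ∀ n, s * (v * u) ^ n = s := by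
    intro n
    induction n with
    | zero => simp
    | succ n ih => rw [pow_succ, ← mul_assoc, ih, hvu]
  calc s = s * (v * u) ^ Nat.factorial (Fintype.card M) := (key _).symm
    _ = s * (omegaPow (v * u) * v) := by rw [h v u]; rfl
    _ = t := by rw [← mul_assoc]; show s * (v*u)^_ * v = t; rw [key, hv]
end

section
/- Every deterministic product of regular languages L₀ a₁ L₁ ⋯ a_k L_k is an unambiguous product: each word u in the product admits exactly one factorization u = u₀ a₁ u₁ ⋯ a_k u_k with u_i ∈ L_i for all i. -/
/-!
Induction on the number of factors. Two factorizations `u₀ a₁ ⋯` and `u₀' a₁ ⋯` of the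
same word give two prefixes `u₀a₁` and `u₀'a₁` in `L₀a₁`, so determinism at `i = 1`
forces `u₀ = u₀'`. Cancelling `u₀a₁`, prefixes of the remaining word in
`L₁a₂⋯L_{i-1}a_i` become prefixes of the whole word in `L₀a₁⋯L_{i-1}a_i`, so the uniqueness of
prefixes passes to the shorter product and the induction goes through.
-/

namespace Products

variable {A : Type*}

/-- `Fact Ls as ws u`: the list `ws = [u₀,…,u_k]` is a factorization
`u = u₀ a₁ u₁ ⋯ a_k u_k` with `u_i ∈ L_i`, witnessing membership of `u` in the
product `L₀a₁L₁⋯a_kL_k`, where `Ls = [L₀,…,L_k]` and `as = [a₁,…,a_k]`. -/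
inductive Fact : List (Set (List A)) → List A → List (List A) → List A → Prop
  | single {L : Set (List A)} {w : List A} : w ∈ L → Fact [L] [] [w] w
  | cons {L : Set (List A)} {Ls : List (Set (List A))} {as : List A} {a : A}
      {w : List A} {ws : List (List A)} {u : List A} :
      w ∈ L → Fact Ls as ws u → Fact (L :: Ls) (a :: as) (w :: ws) (w ++ a :: u)

/-- Membership in the product `L₀a₁L₁⋯a_kL_k`. -/
def InProd (Ls : List (Set (List A))) (as : List A) (u : List A) : Prop :=
  ∃ ws, Fact Ls as ws u

/-- Membership of `p` in the prefix language `L₀a₁L₁⋯L_{i-1}a_i` (for `1 ≤ i ≤ k`). -/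
def InPrefixProd (Ls : List (Set (List A))) (as : List A) (i : ℕ) (p : List A) : Prop :=
  ∃ q ai, as[i - 1]? = some ai ∧ p = q ++ [ai] ∧
    InProd (Ls.take i) (as.take (i - 1)) q

/-- The product `L₀a₁L₁⋯a_kL_k` is deterministic: for each `1 ≤ i ≤ k`, every
word of the product has a unique prefix in `L₀a₁L₁⋯L_{i-1}a_i`. -/
def Deterministic (Ls : List (Set (List A))) (as : List A) : Prop :=
  ∀ i, 1 ≤ i → i ≤ as.length → ∀ u, InProd Ls as u →
    ∃! p : List A, p <+: u ∧ InPrefixProd Ls as i p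

def UniquePrefixes (Ls : List (Set (List A))) (as : List A) (u : List A) : Prop :=
  ∀ i, 1 ≤ i → i ≤ as.length → {p | p <+: u ∧ InPrefixProd Ls as i p}.Subsingleton

theorem Deterministic.uniquePrefixes {Ls : List (Set (List A))} {as : List A}
    (hdet : Deterministic Ls as) {u : List A} (hu : InProd Ls as u) :
    UniquePrefixes Ls as u :=
  fun i hi₁ hi₂ _ hp _ hp' => (hdet i hi₁ hi₂ u hu).unique hp hp'

theorem Fact.cons_inv {L : Set (List A)} {Ls : List (Set (List A))} {a : A} {as : List A}
    {ws : List (List A)} {u : List A} (h : Fact (L :: Ls) (a :: as) ws u) :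
    ∃ w ws₁ u₁, ws = w :: ws₁ ∧ u = w ++ a :: u₁ ∧ w ∈ L ∧ Fact Ls as ws₁ u₁ := by
  cases h with
  | cons hw hf => exact ⟨_, _, _, rfl, rfl, hw, hf⟩

theorem inPrefixProd_one {L : Set (List A)} {Ls : List (Set (List A))} {a : A}
    {as : List A} {w : List A} (hw : w ∈ L) :
    InPrefixProd (L :: Ls) (a :: as) 1 (w ++ [a]) :=
  ⟨w, a, rfl, rfl, [w], Fact.single hw⟩

theorem InPrefixProd.cons {L : Set (List A)} {Ls : List (Set (List A))} {a : A}
    {as : List A} {w q : List A} {j : ℕ} (hw : w ∈ L) (hq : InPrefixProd Ls as (j + 1) q) :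
    InPrefixProd (L :: Ls) (a :: as) (j + 2) (w ++ a :: q) := by
  obtain ⟨r, ai, hget, rfl, rs, hr⟩ := hq
  exact ⟨w ++ a :: r, ai, by simpa using hget, by simp, w :: rs, by simpa using Fact.cons hw hr⟩

theorem UniquePrefixes.head_eq {L : Set (List A)} {Ls : List (Set (List A))} {a : A}
    {as : List A} {w w' u u' : List A} (huniq : UniquePrefixes (L :: Ls) (a :: as) (w ++ a :: u))
    (hw : w ∈ L) (hw' : w' ∈ L) (hu : w ++ a :: u = w' ++ a :: u') : w = w' := by
  have hpre : ∀ v t : List A, v ++ [a] <+: v ++ a :: t := fun v t => ⟨t, by simp⟩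
  have h := huniq 1 le_rfl (by simp) ⟨hpre w u, inPrefixProd_one hw⟩
    ⟨hu ▸ hpre w' u', inPrefixProd_one hw'⟩
  simpa using h

theorem UniquePrefixes.tail {L : Set (List A)} {Ls : List (Set (List A))} {a : A}
    {as : List A} {w u : List A} (huniq : UniquePrefixes (L :: Ls) (a :: as) (w ++ a :: u))
    (hw : w ∈ L) : UniquePrefixes Ls as u := by
  intro i hi₁ hi₂ p ⟨hp, hpp⟩ p' ⟨hp', hpp'⟩
  obtain ⟨j, rfl⟩ : ∃ j, i = j + 1 := ⟨i - 1, by omega⟩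
  have hlift : ∀ q, q <+: u → w ++ a :: q <+: w ++ a :: u := by
    rintro q ⟨t, rfl⟩
    exact ⟨t, by simp⟩
  have h := huniq (j + 2) (by omega) (by simpa using hi₂)
    ⟨hlift p hp, hpp.cons hw⟩ ⟨hlift p' hp', hpp'.cons hw⟩
  simpa using h

theorem Fact.eq_of_uniquePrefixes {Ls : List (Set (List A))} {as : List A}
    {ws ws' : List (List A)} {u : List A} (h : Fact Ls as ws u) (h' : Fact Ls as ws' u)
    (huniq : UniquePrefixes Ls as u) : ws = ws' := by
  induction h generalizing ws' with
  | single => cases h'; rfl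
  | @cons L Ls as a w ws u hw hf ih =>
    obtain ⟨w', ws₁', u', rfl, hu, hw', hf'⟩ := h'.cons_inv
    obtain rfl := huniq.head_eq hw hw' hu
    obtain rfl : u = u' := by simpa using hu
    rw [ih hf' (huniq.tail hw)]

theorem stmt18_general (Ls : List (Set (List A))) (as : List A)
    (hdet : Deterministic Ls as) :
    ∀ u : List A, ∀ ws ws' : List (List A),
      Fact Ls as ws u → Fact Ls as ws' u → ws = ws' :=
  fun _ ws _ h h' => h.eq_of_uniquePrefixes h' (hdet.uniquePrefixes ⟨ws, h⟩)

/-- Every deterministic product of regular languages is unambiguous: each word of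
the product admits exactly one factorization. -/
theorem stmt18 (Ls : List (Set (List A))) (as : List A)
    (hlen : Ls.length = as.length + 1)
    (hreg : ∀ L ∈ Ls, Language.IsRegular (L : Language A))
    (hdet : Deterministic Ls as) :
    ∀ u : List A, ∀ ws ws' : List (List A),
      Fact Ls as ws u → Fact Ls as ws' u → ws = ws' :=
  stmt18_general Ls as hdet

end Products
end
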